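/- For two agents with shares 1/3 < s_1 ≤ 1/2 ≤ s_2 < 2/3, let ⟨A_1, A_2⟩ be a partition achieving WMMS_2 for agent 2 (with A_1 the bundle compared against s_1), and suppose agent 1 picks her preferred bundle X_1 ∈ {A_1, A_2} and agent 2 takes the other, X_2. Then V_2(X_2) ≥ WMMS_2 and V_1(X_1) ≥ (3/2)·WMMS_1. Hence the resulting allocation is a (3/2)-approximation of WMMS. -/

import Mathlib

open Finset

/-- Total value of bundle `k` in the partition `X` of the chores, under valuation `V`. -/
noncomputable def bundleVal {n m : ℕ} (V : Fin m → ℝ) (X : Fin m → Fin n) (k : Fin n) : ℝ :=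
  ∑ j ∈ Finset.univ.filter (fun j => X j = k), V j

/-- The weighted maxmin share of agent `i` with valuation `V` and shares `s`:
`s i` times the maximum over all `n`-partitions of the minimum weighted bundle ratio. -/
noncomputable def WMMS {n m : ℕ} (hn : 0 < n) (s : Fin n → ℝ) (V : Fin m → ℝ) (i : Fin n) : ℝ :=
  haveI : NeZero n := ⟨hn.ne'⟩
  s i * (Finset.univ : Finset (Fin m → Fin n)).sup' Finset.univ_nonempty
    (fun X => (Finset.univ : Finset (Fin n)).inf' Finset.univ_nonempty
      (fun k => bundleVal V X k / s k))

/-! Since values are nonpositive and agent `1` has the largest share, every bundle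
of her optimal partition is worth at least `WMMS_1` to her, so she is content with whichever
bundle is left. Agent `0` takes the better of two bundles worth `-1` in total, hence gets at
least `-1/2`, while `WMMS_0 ≤ -s 0 < -1/3`. -/

section

variable {n m : ℕ}

theorem sum_bundleVal (V : Fin m → ℝ) (X : Fin m → Fin n) :
    ∑ k, bundleVal V X k = ∑ j, V j :=
  Finset.sum_fiberwise _ _ _

theorem bundleVal_nonpos {V : Fin m → ℝ} (hV : ∀ j, V j ≤ 0) (X : Fin m → Fin n) (k : Fin n) :
    bundleVal V X k ≤ 0 :=
  Finset.sum_nonpos fun j _ => hV j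

theorem bundleVal_perm_comp (V : Fin m → ℝ) (σ : Equiv.Perm (Fin n)) (X : Fin m → Fin n)
    (k : Fin n) : bundleVal V (σ ∘ X) k = bundleVal V X (σ.symm k) := by
  unfold bundleVal
  congr 1
  exact Finset.filter_congr fun j _ => (σ.eq_symm_apply).symm

noncomputable def minWeightedRatio [NeZero n] (s : Fin n → ℝ) (V : Fin m → ℝ)
    (X : Fin m → Fin n) : ℝ :=
  univ.inf' univ_nonempty fun k => bundleVal V X k / s k

variable [NeZero n] {s : Fin n → ℝ} {V : Fin m → ℝ}

theorem minWeightedRatio_mul_le (hs : ∀ k, 0 < s k) (X : Fin m → Fin n) (k : Fin n) :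
    minWeightedRatio s V X * s k ≤ bundleVal V X k :=
  (le_div_iff₀ (hs k)).1 (inf'_le _ (mem_univ k))

theorem minWeightedRatio_le_sum (hs : ∀ k, 0 < s k) (hsum : ∑ k, s k = 1)
    (X : Fin m → Fin n) : minWeightedRatio s V X ≤ ∑ j, V j :=
  calc minWeightedRatio s V X = ∑ k, minWeightedRatio s V X * s k := by
        rw [← mul_sum, hsum, mul_one]
    _ ≤ ∑ k, bundleVal V X k := sum_le_sum fun k _ => minWeightedRatio_mul_le hs X k
    _ = ∑ j, V j := sum_bundleVal V X

theorem mul_minWeightedRatio_le_bundleVal (hs : ∀ k, 0 < s k) (hV : ∀ j, V j ≤ 0) {i : Fin n}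
    (hi : ∀ k, s k ≤ s i) (X : Fin m → Fin n) (k : Fin n) :
    s i * minWeightedRatio s V X ≤ bundleVal V X k := by
  have hnonpos : minWeightedRatio s V X ≤ 0 :=
    (inf'_le _ (mem_univ i)).trans (div_nonpos_of_nonpos_of_nonneg (bundleVal_nonpos hV X i)
      (hs i).le)
  calc s i * minWeightedRatio s V X ≤ s k * minWeightedRatio s V X :=
        mul_le_mul_of_nonpos_right (hi k) hnonpos
    _ = minWeightedRatio s V X * s k := mul_comm _ _
    _ ≤ bundleVal V X k := minWeightedRatio_mul_le hs X k

end

theorem WMMS_le_mul_sum {n m : ℕ} (hn : 0 < n) {s : Fin n → ℝ} (V : Fin m → ℝ)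
    (hs : ∀ k, 0 < s k) (hsum : ∑ k, s k = 1) (i : Fin n) :
    WMMS hn s V i ≤ s i * ∑ j, V j :=
  haveI : NeZero n := ⟨hn.ne'⟩
  mul_le_mul_of_nonneg_left (sup'_le _ _ fun X _ => minWeightedRatio_le_sum hs hsum X) (hs i).le

/-- Divide-and-choose for `1/3 < s 0 ≤ 1/2 ≤ s 1 < 2/3`: if agent `1` divides according to a
partition achieving her WMMS and agent `0` picks her preferred bundle, then agent `1` gets at
least `WMMS_1` and agent `0` gets at least `(3/2)·WMMS_0`. -/
theorem stmt_9 {m : ℕ} (s : Fin 2 → ℝ) (V : Fin 2 → Fin m → ℝ)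
    (hs0 : 1/3 < s 0) (hs0' : s 0 ≤ 1/2) (hs1 : 1/2 ≤ s 1)
    (hs_pos : ∀ i, 0 < s i) (hs_sum : s 0 + s 1 = 1)
    (hV : ∀ i j, V i j ≤ 0) (hV_norm : ∀ i, ∑ j, V i j = -1)
    (X : Fin m → Fin 2)
    (hopt : s 1 * (Finset.univ : Finset (Fin 2)).inf' Finset.univ_nonempty
        (fun k => bundleVal (V 1) X k / s k) = WMMS (by norm_num) s (V 1) 1) :
    let Y : Fin m → Fin 2 :=
      if bundleVal (V 0) X 0 ≥ bundleVal (V 0) X 1 then X else (Equiv.swap (0:Fin 2) 1) ∘ X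
    bundleVal (V 1) Y 1 ≥ WMMS (by norm_num) s (V 1) 1 ∧
    bundleVal (V 0) Y 0 ≥ (3/2) * WMMS (by norm_num) s (V 0) 0 := by
  intro Y
  have hs_max : ∀ k, s k ≤ s 1 := Fin.forall_fin_two.2 ⟨hs0'.trans hs1, le_rfl⟩
  have hW1 (k : Fin 2) : WMMS (by norm_num) s (V 1) 1 ≤ bundleVal (V 1) X k :=
    hopt ▸ mul_minWeightedRatio_le_bundleVal hs_pos (hV 1) hs_max X k
  have hW0 : WMMS (by norm_num) s (V 0) 0 ≤ -s 0 := by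
    simpa [hV_norm 0] using
      WMMS_le_mul_sum (by norm_num) (V 0) hs_pos (by simpa [Fin.sum_univ_two] using hs_sum) 0
  have hX0 : bundleVal (V 0) X 0 + bundleVal (V 0) X 1 = -1 := by
    rw [← Fin.sum_univ_two (f := bundleVal (V 0) X), sum_bundleVal, hV_norm 0]
  by_cases h : bundleVal (V 0) X 0 ≥ bundleVal (V 0) X 1
  · simp only [Y, if_pos h]
    exact ⟨hW1 1, by linarith⟩
  · simp only [Y, if_neg h, bundleVal_perm_comp, Equiv.symm_swap, Equiv.swap_apply_left,
      Equiv.swap_apply_right]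
    exact ⟨hW1 0, by linarith⟩
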